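/- F_2 × F_2, where F_2 is the free group of rank 2, contains a finitely generated subgroup that is not finitely presented, so F_2 × F_2 is not coherent; since coherence passes to subgroups, a coherent group cannot contain a subgroup isomorphic to F_2 × F_2. -/

import Mathlib

/-- A group is finitely presented if it is isomorphic to the quotient of a finitely
generated free group by finitely many relators. -/
def FinitelyPresented (G : Type) [Group G] : Prop :=
  ∃ (n : ℕ) (R : Finset (FreeGroup (Fin n))),
    Nonempty (PresentedGroup (R : Set (FreeGroup (Fin n))) ≃* G)

/-- A group is coherent if every finitely generated subgroup is finitely presented. -/
def Coherent (G : Type) [Group G] : Prop :=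
  ∀ H : Subgroup G, H.FG → FinitelyPresented H


open LaurentPolynomial

namespace Stallings

abbrev R := LaurentPolynomial ℤ

theorem T_mul_T (m n : ℤ) : (T m : R) * T n = T (m + n) := (T_add m n).symm

/-- The group of matrices `[[T k, p, c], [0, 1, q], [0, 0, T k]]` over Laurent
polynomials, encoded explicitly. -/
structure E where
  k : ℤ
  p : R
  q : R
  c : R

namespace E

theorem ext' {x y : E} (hk : x.k = y.k) (hp : x.p = y.p) (hq : x.q = y.q)
    (hc : x.c = y.c) : x = y := by
  cases x; cases y; simp_all

noncomputable instance : Mul E :=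
  ⟨fun x y => ⟨x.k + y.k, T x.k * y.p + x.p, y.q + x.q * T y.k,
    T x.k * y.c + x.p * y.q + x.c * T y.k⟩⟩

noncomputable instance : One E := ⟨⟨0, 0, 0, 0⟩⟩

noncomputable instance : Inv E :=
  ⟨fun x => ⟨-x.k, -(T (-x.k) * x.p), -(x.q * T (-x.k)),
    T (-x.k) * (x.p * x.q - x.c) * T (-x.k)⟩⟩

theorem mul_def (x y : E) : x * y = ⟨x.k + y.k, T x.k * y.p + x.p, y.q + x.q * T y.k,
    T x.k * y.c + x.p * y.q + x.c * T y.k⟩ := rfl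

theorem one_def : (1 : E) = ⟨0, 0, 0, 0⟩ := rfl

theorem inv_def (x : E) : x⁻¹ = ⟨-x.k, -(T (-x.k) * x.p), -(x.q * T (-x.k)),
    T (-x.k) * (x.p * x.q - x.c) * T (-x.k)⟩ := rfl

noncomputable instance : Group E where
  mul_assoc x y z := by
    refine ext' ?_ ?_ ?_ ?_ <;> simp only [mul_def, T_add] <;> ring
  one_mul x := by refine ext' ?_ ?_ ?_ ?_ <;> simp [mul_def, one_def]
  mul_one x := by refine ext' ?_ ?_ ?_ ?_ <;> simp [mul_def, one_def]
  inv_mul_cancel x := by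
    refine ext' ?_ ?_ ?_ ?_ <;> simp only [mul_def, inv_def, one_def]
    · omega
    · ring
    · rw [neg_mul, mul_assoc, T_mul_T]; simp
    · rw [mul_assoc, T_mul_T]; simp; ring

end E

end Stallings

namespace Stallings
open LaurentPolynomial

/-- The affine group `[[T k, p],[0,1]]`. -/
structure A where
  k : ℤ
  p : R

namespace A

theorem ext' {x y : A} (hk : x.k = y.k) (hp : x.p = y.p) : x = y := by
  cases x; cases y; simp_all

noncomputable instance : Mul A := ⟨fun x y => ⟨x.k + y.k, T x.k * y.p + x.p⟩⟩
noncomputable instance : One A := ⟨⟨0, 0⟩⟩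
noncomputable instance : Inv A := ⟨fun x => ⟨-x.k, -(T (-x.k) * x.p)⟩⟩

theorem mul_def (x y : A) : x * y = ⟨x.k + y.k, T x.k * y.p + x.p⟩ := rfl
theorem one_def : (1 : A) = ⟨0, 0⟩ := rfl
theorem inv_def (x : A) : x⁻¹ = ⟨-x.k, -(T (-x.k) * x.p)⟩ := rfl

noncomputable instance : Group A where
  mul_assoc x y z := by
    refine ext' ?_ ?_ <;> simp only [mul_def, T_add] <;> ring
  one_mul x := by refine ext' ?_ ?_ <;> simp [mul_def, one_def]
  mul_one x := by refine ext' ?_ ?_ <;> simp [mul_def, one_def]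
  inv_mul_cancel x := by
    refine ext' ?_ ?_ <;>
      simp only [mul_def, one_def, Inv.inv]
    · omega
    · ring

end A

/-- The affine group `[[1, q],[0, T k]]`. -/
structure B where
  k : ℤ
  q : R

namespace B

theorem ext' {x y : B} (hk : x.k = y.k) (hq : x.q = y.q) : x = y := by
  cases x; cases y; simp_all

noncomputable instance : Mul B := ⟨fun x y => ⟨x.k + y.k, y.q + x.q * T y.k⟩⟩
noncomputable instance : One B := ⟨⟨0, 0⟩⟩
noncomputable instance : Inv B := ⟨fun x => ⟨-x.k, -(x.q * T (-x.k))⟩⟩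

theorem mul_def (x y : B) : x * y = ⟨x.k + y.k, y.q + x.q * T y.k⟩ := rfl
theorem one_def : (1 : B) = ⟨0, 0⟩ := rfl
theorem inv_def (x : B) : x⁻¹ = ⟨-x.k, -(x.q * T (-x.k))⟩ := rfl

noncomputable instance : Group B where
  mul_assoc x y z := by
    refine ext' ?_ ?_ <;> simp only [mul_def, T_add] <;> ring
  one_mul x := by refine ext' ?_ ?_ <;> simp [mul_def, one_def]
  mul_one x := by refine ext' ?_ ?_ <;> simp [mul_def, one_def]
  inv_mul_cancel x := by
    refine ext' ?_ ?_ <;>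
      simp only [mul_def, one_def, Inv.inv]
    · omega
    · rw [neg_mul, mul_assoc, T_mul_T]; simp

end B

/-- Projection of `E` onto the upper-left block. -/
noncomputable def projA : E →* A where
  toFun e := ⟨e.k, e.p⟩
  map_one' := rfl
  map_mul' _ _ := rfl

/-- Projection of `E` onto the lower-right block. -/
noncomputable def projB : E →* B where
  toFun e := ⟨e.k, e.q⟩
  map_one' := rfl
  map_mul' _ _ := rfl

/-- Corner elements are central in `E`. -/
theorem E.conj_corner (a : E) (c : R) :
    a * ⟨0, 0, 0, c⟩ * a⁻¹ = ⟨0, 0, 0, c⟩ := by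
  have huv : (T a.k : R) * T (-a.k) = 1 := by rw [T_mul_T]; simp
  refine E.ext' ?_ ?_ ?_ ?_ <;> simp only [E.mul_def, E.inv_def]
  · omega
  · simp only [T_zero, add_zero]
    linear_combination (-(a.p : R)) * huv
  · simp only [T_zero, add_zero, mul_zero, zero_add, mul_one]
    ring
  · simp only [T_zero, add_zero, mul_zero, mul_one, zero_mul, zero_add]
    linear_combination ((T (-a.k) * (a.p * a.q - a.c) + c) : R) * huv

end Stallings

namespace Stallings
open LaurentPolynomial

abbrev F2 := FreeGroup (Fin 2)
abbrev F3 := FreeGroup (Fin 3)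
abbrev G2 := F2 × F2

def ga : F2 := FreeGroup.of 0
def gb : F2 := FreeGroup.of 1

/-- Exponent sum homomorphism. -/
def sigma : F2 →* Multiplicative ℤ :=
  FreeGroup.lift fun _ => Multiplicative.ofAdd (1 : ℤ)

/-- The homomorphism `F₂ × F₂ → ℤ` sending all four generators to `1`. -/
def phi : G2 →* Multiplicative ℤ :=
  (sigma.comp (MonoidHom.fst F2 F2)) * (sigma.comp (MonoidHom.snd F2 F2))

/-- Stallings' group: the kernel of `phi`. -/
def SK : Subgroup G2 := phi.ker

def xx : G2 := (ga, ga⁻¹)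
def yy : G2 := (gb, ga⁻¹)
def zz : G2 := (1, gb * ga⁻¹)

/-- The marking of Stallings' group by three generators. -/
def pim : F3 →* G2 := FreeGroup.lift ![xx, yy, zz]

/-- The Magnus-type representation of `F3` in `E`. -/
noncomputable def Phi : F3 →* E :=
  FreeGroup.lift ![⟨1, 0, 0, 0⟩, ⟨1, 1, 0, 0⟩, ⟨0, 0, T 1, 0⟩]

noncomputable def mu1 : F2 →* A := FreeGroup.lift ![⟨1, 0⟩, ⟨1, 1⟩]
noncomputable def mu2 : F2 →* B := FreeGroup.lift ![⟨-1, 0⟩, ⟨-1, 1⟩]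

theorem linkA : projA.comp Phi = mu1.comp ((MonoidHom.fst F2 F2).comp pim) := by
  apply FreeGroup.ext_hom
  intro i
  fin_cases i <;>
    simp [Phi, mu1, pim, projA, xx, yy, zz, ga, gb] <;>
    refine A.ext' ?_ ?_ <;> simp [A.one_def, A.mul_def, A.inv_def, projA]

theorem linkB : projB.comp Phi = mu2.comp ((MonoidHom.snd F2 F2).comp pim) := by
  apply FreeGroup.ext_hom
  intro i
  fin_cases i <;>
    simp [Phi, mu2, pim, projB, xx, yy, zz, ga, gb] <;>
    refine B.ext' ?_ ?_ <;> simp [B.one_def, B.mul_def, B.inv_def, projB]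

end Stallings


namespace Stallings
open LaurentPolynomial

theorem shape {f : F3} (hf : pim f = 1) :
    Phi f = ⟨0, 0, 0, (Phi f).c⟩ := by
  have hA : projA (Phi f) = 1 := by
    have := congrArg (fun (h : F3 →* A) => h f) linkA
    simp only [MonoidHom.comp_apply] at this
    rw [this, hf]; simp
  have hB : projB (Phi f) = 1 := by
    have := congrArg (fun (h : F3 →* B) => h f) linkB
    simp only [MonoidHom.comp_apply] at this
    rw [this, hf]; simp
  have hk : (Phi f).k = 0 := congrArg A.k hA
  have hp : (Phi f).p = 0 := congrArg A.p hA
  have hq : (Phi f).q = 0 := congrArg B.q hB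
  exact E.ext' hk hp hq rfl

theorem corner_mul {f g : F3} (hf : pim f = 1) (hg : pim g = 1) :
    (Phi (f * g)).c = (Phi f).c + (Phi g).c := by
  rw [map_mul, shape hf, shape hg, E.mul_def]
  simp
  ring

theorem corner_inv {f : F3} (hf : pim f = 1) :
    (Phi f⁻¹).c = -(Phi f).c := by
  rw [map_inv, shape hf, E.inv_def]
  simp

theorem corner_conj (f : F3) {w : F3} (hw : pim w = 1) :
    (Phi (f * w * f⁻¹)).c = (Phi w).c := by
  rw [map_mul, map_mul, map_inv, shape hw, E.conj_corner]

def X3 : F3 := FreeGroup.of 0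
def Y3 : F3 := FreeGroup.of 1
def Z3 : F3 := FreeGroup.of 2

/-- The relators `[xᵐ(xy⁻¹)x⁻ᵐ, z]`. -/
def rel (m : ℕ) : F3 :=
  (X3 ^ m * (X3 * Y3⁻¹) * (X3 ^ m)⁻¹) * Z3 *
    (X3 ^ m * (X3 * Y3⁻¹) * (X3 ^ m)⁻¹)⁻¹ * Z3⁻¹

theorem pim_rel (m : ℕ) : pim (rel m) = 1 := by
  have hXY : pim (X3 * Y3⁻¹) = (ga * gb⁻¹, 1) := by
    rw [map_mul, map_inv]
    simp [pim, X3, Y3]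
    rw [xx, yy, Prod.inv_mk, Prod.mk_mul_mk]
    simp
  have hp : pim (X3 ^ m * (X3 * Y3⁻¹) * (X3 ^ m)⁻¹) =
      (ga ^ m * (ga * gb⁻¹) * (ga ^ m)⁻¹, 1) := by
    rw [map_mul, map_mul, map_inv, map_pow, hXY]
    have : pim X3 = xx := by simp [pim, X3]
    rw [this, xx]
    refine Prod.ext ?_ ?_ <;> simp
  rw [rel, map_mul, map_mul, map_mul, map_inv, map_inv, hp]
  have hz : pim Z3 = zz := by simp [pim, Z3]
  rw [hz, zz]
  refine Prod.ext ?_ ?_ <;> simp <;> group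

end Stallings

namespace Stallings
open LaurentPolynomial

theorem Phi_X3 : Phi X3 = ⟨1, 0, 0, 0⟩ := by simp [Phi, X3]
theorem Phi_Y3 : Phi Y3 = ⟨1, 1, 0, 0⟩ := by simp [Phi, Y3]
theorem Phi_Z3 : Phi Z3 = ⟨0, 0, T 1, 0⟩ := by simp [Phi, Z3]

theorem Phi_X_pow (m : ℕ) : Phi (X3 ^ m) = ⟨(m : ℤ), 0, 0, 0⟩ := by
  induction m with
  | zero => simp [E.one_def]
  | succ n ih =>
    rw [pow_succ, map_mul, ih, Phi_X3, E.mul_def]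
    refine E.ext' ?_ ?_ ?_ ?_ <;> dsimp only <;> push_cast <;> ring_nf <;> simp

theorem Phi_XY : Phi (X3 * Y3⁻¹) = ⟨0, -1, 0, 0⟩ := by
  rw [map_mul, map_inv, Phi_X3, Phi_Y3, E.inv_def, E.mul_def]
  refine E.ext' ?_ ?_ ?_ ?_ <;> dsimp only <;>
    simp only [T_mul_T, neg_add_cancel, add_neg_cancel, T_zero, mul_zero, zero_mul,
      mul_one, one_mul, add_zero, zero_add, neg_zero, mul_neg, neg_neg, zero_sub, neg_mul] <;>
    norm_num

theorem Phi_P (m : ℕ) : Phi (X3 ^ m * (X3 * Y3⁻¹) * (X3 ^ m)⁻¹) =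
    ⟨0, -T (m : ℤ), 0, 0⟩ := by
  rw [map_mul, map_mul, map_inv, Phi_X_pow, Phi_XY, E.inv_def, E.mul_def, E.mul_def]
  refine E.ext' ?_ ?_ ?_ ?_ <;> dsimp only <;>
    simp only [T_mul_T, neg_add_cancel, add_neg_cancel, T_zero, mul_zero, zero_mul,
      mul_one, one_mul, add_zero, zero_add, neg_zero, mul_neg, neg_neg, zero_sub, neg_mul] <;>
    norm_num

theorem Phi_rel (m : ℕ) : Phi (rel m) = ⟨0, 0, 0, -T ((m : ℤ) + 1)⟩ := by
  rw [rel, map_mul, map_mul, map_mul, map_inv, map_inv, Phi_P, Phi_Z3,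
    E.inv_def, E.inv_def, E.mul_def, E.mul_def, E.mul_def]
  refine E.ext' ?_ ?_ ?_ ?_ <;> dsimp only <;>
    simp only [T_mul_T, neg_add_cancel, add_neg_cancel, T_zero, mul_zero, zero_mul,
      mul_one, one_mul, add_zero, zero_add, neg_zero, mul_neg, neg_neg, zero_sub, neg_mul,
      sub_zero, neg_add_rev] <;>
    norm_num

end Stallings

namespace Stallings
open LaurentPolynomial

theorem sigma_of (i : Fin 2) : sigma (FreeGroup.of i) = Multiplicative.ofAdd (1 : ℤ) := by
  simp [sigma]

/-- Everything in the range of `pim` is in `SK`. -/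
theorem range_le : pim.range ≤ SK := by
  rintro - ⟨f, rfl⟩
  have : phi.comp pim = 1 := by
    apply FreeGroup.ext_hom
    intro i
    fin_cases i <;>
      simp [phi, pim, xx, yy, zz, ga, gb, sigma] <;> rfl
  have hf : phi (pim f) = 1 := by
    have := congrArg (fun (h : F3 →* Multiplicative ℤ) => h f) this
    simpa using this
  exact hf

end Stallings

namespace Stallings
open LaurentPolynomial

theorem ker_sigma_le_nc (i j : Fin 2) (hcov : ∀ g : Fin 2, g = i ∨ g = j) :
    ∀ u : F2, sigma u = 1 →
      u ∈ Subgroup.normalClosure {FreeGroup.of i * (FreeGroup.of j)⁻¹} := by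
  set N := Subgroup.normalClosure ({FreeGroup.of i * (FreeGroup.of j)⁻¹} : Set F2) with hN
  have hmem : FreeGroup.of i * (FreeGroup.of j)⁻¹ ∈ N :=
    Subgroup.subset_normalClosure rfl
  set ρ := QuotientGroup.mk' N with hρ
  have hker : FreeGroup.of i * (FreeGroup.of j)⁻¹ ∈ ρ.ker := by
    rw [hρ, QuotientGroup.ker_mk']; exact hmem
  have h1 : ρ (FreeGroup.of i) * (ρ (FreeGroup.of j))⁻¹ = 1 := by
    rw [← map_inv, ← map_mul]; exact MonoidHom.mem_ker.1 hker
  have hij : ρ (FreeGroup.of j) = ρ (FreeGroup.of i) := (mul_inv_eq_one.1 h1).symm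
  have claim : ∀ u : F2, ρ u = ρ (FreeGroup.of i) ^ (sigma u).toAdd := by
    intro u
    induction u using FreeGroup.induction_on with
    | C1 => simp
    | of g =>
      show ρ (FreeGroup.of g) = ρ (FreeGroup.of i) ^ (sigma (FreeGroup.of g)).toAdd
      rw [sigma_of, toAdd_ofAdd, zpow_one]
      rcases hcov g with h | h <;> subst h
      · rfl
      · exact hij
    | inv_of g ih =>
      show ρ (FreeGroup.of g)⁻¹ = ρ (FreeGroup.of i) ^ (sigma (FreeGroup.of g)⁻¹).toAdd
      simp only [map_inv, toAdd_inv, zpow_neg]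
      exact inv_inj.2 ih
    | mul v w ihv ihw =>
      rw [map_mul, ihv, ihw, map_mul, toAdd_mul, zpow_add]
  intro u hu
  have hu1 : ρ u = 1 := by rw [claim, hu]; simp
  have : u ∈ ρ.ker := MonoidHom.mem_ker.2 hu1
  rwa [hρ, QuotientGroup.ker_mk'] at this

theorem xx_mem : xx ∈ pim.range := ⟨FreeGroup.of 0, by simp [pim]⟩
theorem yy_mem : yy ∈ pim.range := ⟨FreeGroup.of 1, by simp [pim]⟩
theorem zz_mem : zz ∈ pim.range := ⟨FreeGroup.of 2, by simp [pim]⟩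

theorem xy_mem : (ga * gb⁻¹, (1 : F2)) ∈ pim.range := by
  have := mul_mem xx_mem (inv_mem yy_mem)
  rwa [xx, yy, Prod.inv_mk, Prod.mk_mul_mk, inv_inv, inv_mul_cancel] at this

theorem proj1_surj : ∀ u : F2, ∃ v, (u, v) ∈ pim.range := by
  intro u
  induction u using FreeGroup.induction_on with
  | C1 => exact ⟨1, one_mem _⟩
  | of g =>
    rcases (by omega : g = 0 ∨ g = 1) with h | h <;> subst h
    · exact ⟨ga⁻¹, xx_mem⟩
    · exact ⟨ga⁻¹, yy_mem⟩
  | inv_of g ih =>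
    obtain ⟨v, hv⟩ := ih
    exact ⟨v⁻¹, by simpa using inv_mem hv⟩
  | mul s t ihs iht =>
    obtain ⟨v, hv⟩ := ihs
    obtain ⟨w, hw⟩ := iht
    exact ⟨v * w, mul_mem hv hw⟩

theorem proj2_surj : ∀ v : F2, ∃ u, (u, v) ∈ pim.range := by
  intro v
  induction v using FreeGroup.induction_on with
  | C1 => exact ⟨1, one_mem _⟩
  | of g =>
    rcases (by omega : g = 0 ∨ g = 1) with h | h <;> subst h
    · refine ⟨ga⁻¹, ?_⟩
      have := inv_mem xx_mem
      rwa [xx, Prod.inv_mk, inv_inv] at this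
    · refine ⟨ga⁻¹, ?_⟩
      have := mul_mem zz_mem (inv_mem xx_mem)
      rwa [xx, zz, Prod.inv_mk, Prod.mk_mul_mk, one_mul, inv_inv, mul_assoc,
        inv_mul_cancel, mul_one] at this
  | inv_of g ih =>
    obtain ⟨u, hu⟩ := ih
    exact ⟨u⁻¹, by simpa using inv_mem hu⟩
  | mul s t ihs iht =>
    obtain ⟨u, hu⟩ := ihs
    obtain ⟨w, hw⟩ := iht
    exact ⟨u * w, mul_mem hu hw⟩

theorem mem1 {u : F2} (hu : sigma u = 1) : ((u, 1) : G2) ∈ pim.range := by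
  have hnc := ker_sigma_le_nc 0 1 (by omega) u hu
  have hle : Subgroup.normalClosure ({ga * gb⁻¹} : Set F2) ≤
      pim.range.comap (MonoidHom.inl F2 F2) := by
    apply (Subgroup.closure_le _).2
    rintro w hw
    rw [Group.mem_conjugatesOfSet_iff] at hw
    obtain ⟨g, hg, hconj⟩ := hw
    rw [Set.mem_singleton_iff] at hg
    subst hg
    obtain ⟨cc, hcc⟩ := isConj_iff.1 hconj
    obtain ⟨v, hv⟩ := proj1_surj cc
    have hm := mul_mem (mul_mem hv xy_mem) (inv_mem hv)
    rw [Prod.inv_mk, Prod.mk_mul_mk, Prod.mk_mul_mk, mul_one, mul_inv_cancel] at hm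
    simp only [SetLike.mem_coe, Subgroup.mem_comap]
    rw [← hcc]
    exact hm
  exact hle hnc

theorem mem2 {v : F2} (hv : sigma v = 1) : ((1, v) : G2) ∈ pim.range := by
  have hnc := ker_sigma_le_nc 1 0 (by omega) v hv
  have hle : Subgroup.normalClosure ({gb * ga⁻¹} : Set F2) ≤
      pim.range.comap (MonoidHom.inr F2 F2) := by
    apply (Subgroup.closure_le _).2
    rintro w hw
    rw [Group.mem_conjugatesOfSet_iff] at hw
    obtain ⟨g, hg, hconj⟩ := hw
    rw [Set.mem_singleton_iff] at hg
    subst hg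
    obtain ⟨cc, hcc⟩ := isConj_iff.1 hconj
    obtain ⟨u, hu⟩ := proj2_surj cc
    have hm := mul_mem (mul_mem hu zz_mem) (inv_mem hu)
    rw [zz, Prod.inv_mk, Prod.mk_mul_mk, Prod.mk_mul_mk, mul_one, mul_inv_cancel] at hm
    simp only [SetLike.mem_coe, Subgroup.mem_comap]
    rw [← hcc]
    exact hm
  exact hle hnc

theorem le_range : SK ≤ pim.range := by
  rintro ⟨u, v⟩ huv
  have hphi : sigma u * sigma v = 1 := huv
  set k : ℤ := (sigma u).toAdd with hk
  have hsu : Multiplicative.ofAdd k = sigma u := ofAdd_toAdd _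
  have hsga : ∀ n : ℤ, sigma (ga ^ n) = Multiplicative.ofAdd n := by
    intro n
    rw [map_zpow, ga, sigma_of, ← ofAdd_zsmul]
    simp
  have h1 : sigma (u * ga ^ (-k)) = 1 := by
    rw [map_mul, hsga, ← hsu, ← ofAdd_add]
    simp
  have h2 : sigma (v * ga ^ k) = 1 := by
    have hv : sigma v = (sigma u)⁻¹ := eq_inv_of_mul_eq_one_left
      ((mul_comm (sigma u) (sigma v)) ▸ hphi)
    rw [map_mul, hsga, hv, ← hsu]
    simp
  have hfst : (MonoidHom.fst F2 F2) (xx ^ k) = ga ^ k := by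
    rw [map_zpow]; rfl
  have hsnd : (MonoidHom.snd F2 F2) (xx ^ k) = (ga⁻¹) ^ k := by
    rw [map_zpow]; rfl
  have hxk : xx ^ k = (ga ^ k, (ga⁻¹) ^ k) := Prod.ext hfst hsnd
  have heq : ((u, v) : G2) = ((u * ga ^ (-k), 1) : G2) * (1, v * ga ^ k) * xx ^ k := by
    rw [hxk, Prod.mk_mul_mk, Prod.mk_mul_mk]
    refine Prod.ext ?_ ?_ <;> simp [zpow_neg, inv_zpow] <;> group
  rw [heq]
  exact mul_mem (mul_mem (mem1 h1) (mem2 h2)) (zpow_mem xx_mem k)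

theorem range_eq : pim.range = SK := le_antisymm range_le le_range

end Stallings

namespace Stallings
open LaurentPolynomial

/-- The subgroup of `F3` of elements killed by `pim` whose corner invariant vanishes
in degree `n`. -/
noncomputable def Sn (n : ℤ) : Subgroup F3 where
  carrier := {f | pim f = 1 ∧ (Phi f).c.coeff n = 0}
  one_mem' := by
    constructor
    · exact map_one pim
    · have : Phi 1 = 1 := map_one Phi
      rw [this, E.one_def]
      simp
  mul_mem' := by
    rintro f g ⟨hf1, hf2⟩ ⟨hg1, hg2⟩
    constructor
    · rw [map_mul, hf1, hg1, one_mul]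
    · rw [corner_mul hf1 hg1, AddMonoidAlgebra.coeff_add, Finsupp.add_apply, hf2, hg2, add_zero]
  inv_mem' := by
    rintro f ⟨hf1, hf2⟩
    constructor
    · rw [map_inv, hf1, inv_one]
    · rw [corner_inv hf1, AddMonoidAlgebra.coeff_neg, Finsupp.neg_apply, hf2, neg_zero]

instance Sn_normal (n : ℤ) : (Sn n).Normal := by
  constructor
  rintro f ⟨hf1, hf2⟩ g
  constructor
  · rw [map_mul, map_mul, map_inv, hf1, mul_one, mul_inv_cancel]
  · rw [corner_conj g hf1]
    exact hf2

/-- The kernel of `pim` is not the normal closure of any finite set. -/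
theorem ker_not_fin_nc (T : Finset F3) :
    pim.ker ≠ Subgroup.normalClosure (↑T : Set F3) := by
  classical
  intro h
  set m : ℕ := T.sup fun t => ((Phi t).c.coeff.support.sup fun z => z.toNat) with hm
  set n : ℤ := (m : ℤ) + 1 with hn
  have hTS : (↑T : Set F3) ⊆ Sn n := by
    intro t ht
    rw [Finset.mem_coe] at ht
    have htk : t ∈ pim.ker := by
      rw [h]
      exact Subgroup.subset_normalClosure ht
    refine ⟨htk, ?_⟩
    by_contra hne
    have hsup : n ∈ (Phi t).c.coeff.support := Finsupp.mem_support_iff.2 hne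
    have h1 : n.toNat ≤ ((Phi t).c.coeff.support.sup fun z => z.toNat) :=
      Finset.le_sup (f := fun z : ℤ => z.toNat) hsup
    have h2 : ((Phi t).c.coeff.support.sup fun z => z.toNat) ≤ m :=
      Finset.le_sup (f := fun t => ((Phi t).c.coeff.support.sup fun z => z.toNat)) ht
    have : n.toNat = m + 1 := by omega
    omega
  have hle : Subgroup.normalClosure (↑T : Set F3) ≤ Sn n :=
    Subgroup.normalClosure_le_normal hTS
  have hrel : rel m ∈ pim.ker := pim_rel m
  rw [h] at hrel
  have hc := (hle hrel).2
  rw [Phi_rel m] at hc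
  rw [AddMonoidAlgebra.coeff_neg, Finsupp.neg_apply] at hc
  rw [LaurentPolynomial.T_apply] at hc
  norm_num [hn] at hc

end Stallings

namespace Stallings

/-- If `H` is finitely presented, the kernel of any surjection from `F3` onto `H`
is the normal closure of a finite set. -/
theorem fp_kernel_fin_nc {H : Type} [Group H] (hfp : FinitelyPresented H)
    (g : F3 →* H) (hg : Function.Surjective g) :
    ∃ T : Finset F3, g.ker = Subgroup.normalClosure (↑T : Set F3) := by
  classical
  obtain ⟨nn, R, ⟨e⟩⟩ := hfp
  set q : FreeGroup (Fin nn) →* H :=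
    e.toMonoidHom.comp (PresentedGroup.mk (↑R : Set (FreeGroup (Fin nn)))) with hq
  have hqs : Function.Surjective q :=
    e.surjective.comp (PresentedGroup.mk_surjective _)
  choose w hw using fun i : Fin nn => hg (q (FreeGroup.of i))
  set θ : FreeGroup (Fin nn) →* F3 := FreeGroup.lift w with hθ
  have hgθ : ∀ r, g (θ r) = q r := by
    have : g.comp θ = q := by
      apply FreeGroup.ext_hom; intro i
      simp [hθ, hw]
    intro r
    have := congrArg (fun (h : FreeGroup (Fin nn) →* H) => h r) this
    simpa using this
  choose v hv using fun j : Fin 3 => hqs (g (FreeGroup.of j))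
  set T : Finset F3 :=
    R.image θ ∪ Finset.univ.image (fun j : Fin 3 => FreeGroup.of j * (θ (v j))⁻¹) with hT
  set M := Subgroup.normalClosure (↑T : Set F3) with hM
  have hTmem1 : ∀ r ∈ R, θ r ∈ M := by
    intro r hr
    apply Subgroup.subset_normalClosure
    rw [Finset.mem_coe, hT, Finset.mem_union]
    exact Or.inl (Finset.mem_image_of_mem θ hr)
  have hTmem2 : ∀ j : Fin 3, FreeGroup.of j * (θ (v j))⁻¹ ∈ M := by
    intro j
    apply Subgroup.subset_normalClosure
    rw [Finset.mem_coe, hT, Finset.mem_union]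
    exact Or.inr (Finset.mem_image_of_mem _ (Finset.mem_univ j))
  refine ⟨T, le_antisymm ?_ ?_⟩
  · -- ker g ≤ M, via the homomorphism κ : H →* F3 ⧸ M
    have hliftθ : FreeGroup.lift (fun i => QuotientGroup.mk' M (w i)) =
        (QuotientGroup.mk' M).comp θ := by
      apply FreeGroup.ext_hom; intro i
      simp [hθ]
    have hrels : ∀ r ∈ (↑R : Set (FreeGroup (Fin nn))),
        FreeGroup.lift (fun i => QuotientGroup.mk' M (w i)) r = 1 := by
      intro r hr
      rw [hliftθ]
      show QuotientGroup.mk' M (θ r) = 1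
      rw [QuotientGroup.mk'_apply, QuotientGroup.eq_one_iff]
      exact hTmem1 r (Finset.mem_coe.1 hr)
    set κ' : PresentedGroup (↑R : Set (FreeGroup (Fin nn))) →* F3 ⧸ M :=
      PresentedGroup.toGroup hrels with hκ'
    set κ : H →* F3 ⧸ M := κ'.comp e.symm.toMonoidHom with hκ
    have hκq : ∀ s, κ (q s) = QuotientGroup.mk' M (θ s) := by
      intro s
      have h1 : κ (q s) = κ' (PresentedGroup.mk _ s) := by
        rw [hκ, hq]
        simp
      rw [h1]
      have h2 : κ' (PresentedGroup.mk _ s) =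
          FreeGroup.lift (fun i => QuotientGroup.mk' M (w i)) s := rfl
      rw [h2, hliftθ]
      rfl
    have hfact : ∀ f, κ (g f) = QuotientGroup.mk' M f := by
      have : κ.comp g = QuotientGroup.mk' M := by
        apply FreeGroup.ext_hom; intro j
        show κ (g (FreeGroup.of j)) = QuotientGroup.mk' M (FreeGroup.of j)
        rw [← hv j, hκq]
        have hmem := hTmem2 j
        have : QuotientGroup.mk' M (FreeGroup.of j * (θ (v j))⁻¹) = 1 := by
          rw [QuotientGroup.mk'_apply, QuotientGroup.eq_one_iff]
          exact hmem
        rw [map_mul, map_inv] at this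
        exact (mul_inv_eq_one.1 this).symm
      intro f
      have := congrArg (fun (h : F3 →* F3 ⧸ M) => h f) this
      simpa using this
    intro f hf
    have hf1 : g f = 1 := hf
    have : QuotientGroup.mk' M f = 1 := by
      rw [← hfact, hf1, map_one]
    rwa [QuotientGroup.mk'_apply, QuotientGroup.eq_one_iff] at this
  · -- M ≤ ker g
    apply Subgroup.normalClosure_le_normal
    intro t ht
    rw [Finset.mem_coe, hT, Finset.mem_union] at ht
    rcases ht with ht | ht
    · obtain ⟨r, hr, rfl⟩ := Finset.mem_image.1 ht
      have : q r = 1 := by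
        rw [hq]
        simp only [MonoidHom.comp_apply]
        have : PresentedGroup.mk (↑R : Set (FreeGroup (Fin nn))) r = 1 :=
          (QuotientGroup.eq_one_iff r).2
            (Subgroup.subset_normalClosure (Finset.mem_coe.2 hr))
        rw [this, map_one]
      have : g (θ r) = 1 := by rw [hgθ, this]
      exact this
    · obtain ⟨j, _, rfl⟩ := Finset.mem_image.1 ht
      show g _ = 1
      rw [map_mul, map_inv, hgθ, hv, mul_inv_cancel]

end Stallings

namespace Stallings

theorem SK_fg : SK.FG := by
  rw [← range_eq, pim, FreeGroup.range_lift_eq_closure]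
  rw [Subgroup.fg_iff]
  exact ⟨Set.range ![xx, yy, zz], rfl, Set.finite_range _⟩

/-- The canonical surjection `F3 →* SK`. -/
def piK : F3 →* ↥SK :=
  pim.codRestrict SK fun f => range_le ⟨f, rfl⟩

theorem piK_surj : Function.Surjective piK := by
  rintro ⟨gval, hg⟩
  obtain ⟨f, hf⟩ := le_range hg
  exact ⟨f, Subtype.ext hf⟩

theorem piK_ker : piK.ker = pim.ker := MonoidHom.ker_codRestrict pim SK _

/-- Stallings' group is not finitely presented. -/
theorem SK_not_fp : ¬ FinitelyPresented ↥SK := by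
  intro hfp
  obtain ⟨T, hT⟩ := fp_kernel_fin_nc hfp piK piK_surj
  rw [piK_ker] at hT
  exact ker_not_fin_nc T hT

end Stallings

namespace Stallings

theorem fp_of_iso {G1 G2 : Type} [Group G1] [Group G2] (e : G1 ≃* G2) :
    FinitelyPresented G1 → FinitelyPresented G2 := by
  rintro ⟨n, R, ⟨i⟩⟩
  exact ⟨n, R, ⟨i.trans e⟩⟩

theorem fg_map {G1 G2 : Type} [Group G1] [Group G2] (f : G1 →* G2)
    {H : Subgroup G1} (h : H.FG) : (H.map f).FG := by
  rw [Subgroup.fg_iff] at h ⊢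
  obtain ⟨S, hS, hfin⟩ := h
  exact ⟨f '' S, by rw [← MonoidHom.map_closure, hS], hfin.image _⟩

theorem coherent_of_iso {G1 G2 : Type} [Group G1] [Group G2] (e : G1 ≃* G2)
    (h : Coherent G1) : Coherent G2 := by
  intro H' hfg
  have h1 : (H'.map e.symm.toMonoidHom).FG := fg_map _ hfg
  have h2 := h _ h1
  exact fp_of_iso (MulEquiv.subgroupMap e.symm H').symm h2

theorem coherent_subgroup {G : Type} [Group G] (h : Coherent G) (H : Subgroup G) :
    Coherent ↥H := by
  intro H' hfg
  have h1 : (H'.map H.subtype).FG := fg_map _ hfg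
  have h2 := h _ h1
  exact fp_of_iso (Subgroup.equivMapOfInjective H' H.subtype H.subtype_injective).symm h2

theorem not_coherent_G2 : ¬ Coherent G2 := fun h => SK_not_fp (h SK SK_fg)

end Stallings


/-- A coherent group cannot contain a subgroup isomorphic to F₂ × F₂. Equivalently:
coherence passes to subgroups, and F₂ × F₂ is not coherent, since it contains a finitely
generated subgroup that is not finitely presented. -/
theorem coherent_no_F2_times_F2 :
    (∀ (G : Type) [Group G], Coherent G → ∀ H : Subgroup G,
      IsEmpty (H ≃* (FreeGroup (Fin 2) × FreeGroup (Fin 2)))) ∧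
    (∀ (G : Type) [Group G] (H : Subgroup G), Coherent G → Coherent H) ∧
    ¬ Coherent (FreeGroup (Fin 2) × FreeGroup (Fin 2)) ∧
    (∃ K : Subgroup (FreeGroup (Fin 2) × FreeGroup (Fin 2)),
      K.FG ∧ ¬ FinitelyPresented K) := by
  refine ⟨?_, ?_, Stallings.not_coherent_G2,
    ⟨Stallings.SK, Stallings.SK_fg, Stallings.SK_not_fp⟩⟩
  · intro G _ hG H
    constructor
    intro e
    exact Stallings.not_coherent_G2
      (Stallings.coherent_of_iso e (Stallings.coherent_subgroup hG H))
  · intro G _ H hG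
    exact Stallings.coherent_subgroup hG H
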